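/- Let G₁=(V₁,E₁) and G₂=(V₂,E₂) be vertex-disjoint circuits in the simple (2,2)-sparsity matroid, where G₁ contains an edge a₁b₁ and G₂ contains a 2-vertex cut {a₂,b₂} with one side of the cut inducing a copy of K4 on vertices a₂,b₂,c₂,d₂. Then the 1-sum G₁ ⊕₁ G₂, obtained by deleting the edge a₁b₁ from G₁, deleting c₂, d₂ and the edge a₂b₂ from G₂, and identifying a₁ with a₂ and b₁ with b₂, is a circuit in the simple (2,2)-sparsity matroid. -/

import Mathlib

variable {V : Type*}

/-- The number of edges of `G` induced by the vertex set `X`. -/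
noncomputable def indEdges (G : SimpleGraph V) (X : Set V) : ℕ :=
  {e ∈ G.edgeSet | ∀ v ∈ e, v ∈ X}.ncard

/-- A circuit in the simple (2,2)-sparsity matroid: `|E| = 2|V| - 1` and every proper
subset of vertices induces at most `2|X| - 2` edges. -/
def IsCircuit [Fintype V] (G : SimpleGraph V) : Prop :=
  (G.edgeSet.ncard : ℤ) = 2 * Fintype.card V - 1 ∧
  ∀ X : Finset V, X ⊂ Finset.univ → indEdges G ↑X ≤ 2 * X.card - 2

lemma bijOn_ncard {α β : Type*} {s : Set α} {t : Set β} {f : α → β}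
    (h : Set.BijOn f s t) : t.ncard = s.ncard := by
  rw [← h.image_eq]; exact Set.ncard_image_of_injOn h.injOn

lemma indEdges_empty (G : SimpleGraph V) : indEdges G ∅ = 0 := by
  unfold indEdges
  have h : {e ∈ G.edgeSet | ∀ v ∈ e, v ∈ (∅ : Set V)} = ∅ := by
    ext e
    induction e using Sym2.ind with
    | _ x y =>
      simp only [Set.mem_setOf_eq, Set.mem_empty_iff_false, iff_false, not_and]
      intro _ h
      exact h x (Sym2.mem_mk_left x y)
  rw [h, Set.ncard_empty]

lemma indEdges_univ (G : SimpleGraph V) : indEdges G Set.univ = G.edgeSet.ncard := by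
  simp [indEdges]

lemma circuit_bound [Fintype V] {G : SimpleGraph V} (h : IsCircuit G) (Y : Set V)
    (hY : Y ≠ Set.univ) (hne : Y.Nonempty) : indEdges G Y + 2 ≤ 2 * Y.ncard := by
  classical
  have hfin : Y.Finite := Y.toFinite
  set F := hfin.toFinset with hF
  have hcoe : (F : Set V) = Y := hfin.coe_toFinset
  have hub : indEdges G ↑F ≤ 2 * F.card - 2 := by
    refine h.2 F (Finset.ssubset_univ_iff.2 ?_)
    intro hEq
    exact hY (by rw [← hcoe, hEq, Finset.coe_univ])
  rw [hcoe] at hub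
  have hcard : F.card = Y.ncard := by
    rw [Set.ncard_eq_toFinset_card Y hfin]
  have hpos : 1 ≤ F.card := by
    rw [Finset.one_le_card, ← Finset.coe_nonempty]
    rw [hcoe]; exact hne
  omega
section OneSumAux

variable {V₁ V₂ : Type*} (G₁ : SimpleGraph V₁) (G₂ : SimpleGraph V₂)
  (a₁ b₁ : V₁) (a₂ b₂ c₂ d₂ : V₂) [DecidableEq V₂]

/-- The edge set of the 1-sum. -/
def sumES : Set (Sym2 (V₁ ⊕ {x : V₂ // x ∉ ({a₂, b₂, c₂, d₂} : Finset V₂)})) :=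
  {e | ∃ x y : V₁, G₁.Adj x y ∧ s(x, y) ≠ s(a₁, b₁) ∧ e = s(Sum.inl x, Sum.inl y)} ∪
  {e | ∃ x y : {x : V₂ // x ∉ ({a₂, b₂, c₂, d₂} : Finset V₂)},
      G₂.Adj ↑x ↑y ∧ e = s(Sum.inr x, Sum.inr y)} ∪
  {e | ∃ y : {x : V₂ // x ∉ ({a₂, b₂, c₂, d₂} : Finset V₂)},
      G₂.Adj a₂ ↑y ∧ e = s(Sum.inl a₁, Sum.inr y)} ∪
  {e | ∃ y : {x : V₂ // x ∉ ({a₂, b₂, c₂, d₂} : Finset V₂)},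
      G₂.Adj b₂ ↑y ∧ e = s(Sum.inl b₁, Sum.inr y)}

/-- The subset of `V₂` corresponding to a subset of the vertex set of the 1-sum. -/
def oneSumY (X : Set (V₁ ⊕ {x : V₂ // x ∉ ({a₂, b₂, c₂, d₂} : Finset V₂)})) : Set V₂ :=
  (Subtype.val '' {x | Sum.inr x ∈ X}) ∪ {v | v = a₂ ∧ Sum.inl a₁ ∈ X} ∪
    {v | v = b₂ ∧ Sum.inl b₁ ∈ X}

open Classical in
/-- 1 if both identified vertices are in `X`, else 0. -/
noncomputable def oneSumEps (X : Set (V₁ ⊕ {x : V₂ // x ∉ ({a₂, b₂, c₂, d₂} : Finset V₂)})) : ℕ :=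
  if Sum.inl a₁ ∈ X ∧ Sum.inl b₁ ∈ X then 1 else 0

lemma oneSumEps_pos {X : Set (V₁ ⊕ {x : V₂ // x ∉ ({a₂, b₂, c₂, d₂} : Finset V₂)})}
    (h : Sum.inl a₁ ∈ X ∧ Sum.inl b₁ ∈ X) : oneSumEps a₁ b₁ a₂ b₂ c₂ d₂ X = 1 := by
  rw [oneSumEps, if_pos h]

lemma oneSumEps_neg {X : Set (V₁ ⊕ {x : V₂ // x ∉ ({a₂, b₂, c₂, d₂} : Finset V₂)})}
    (h : ¬(Sum.inl a₁ ∈ X ∧ Sum.inl b₁ ∈ X)) : oneSumEps a₁ b₁ a₂ b₂ c₂ d₂ X = 0 := by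
  rw [oneSumEps, if_neg h]

lemma sumES_edgeSet :
    (SimpleGraph.fromEdgeSet (sumES G₁ G₂ a₁ b₁ a₂ b₂ c₂ d₂)).edgeSet
      = sumES G₁ G₂ a₁ b₁ a₂ b₂ c₂ d₂ := by
  rw [SimpleGraph.edgeSet_fromEdgeSet, sdiff_eq_left]
  rw [Set.disjoint_right]
  rintro e hd hs
  rw [Sym2.mem_diagSet] at hd
  rcases hs with ((h | h) | h) | h
  · obtain ⟨x, y, hxy, -, rfl⟩ := h
    rw [Sym2.mk_isDiag_iff] at hd
    exact hxy.ne (Sum.inl_injective hd)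
  · obtain ⟨x, y, hxy, rfl⟩ := h
    rw [Sym2.mk_isDiag_iff] at hd
    exact hxy.ne (congrArg Subtype.val (Sum.inr_injective hd))
  · obtain ⟨y, hy, rfl⟩ := h
    rw [Sym2.mk_isDiag_iff] at hd
    simp at hd
  · obtain ⟨y, hy, rfl⟩ := h
    rw [Sym2.mk_isDiag_iff] at hd
    simp at hd

lemma oneSumY_mem (X : Set (V₁ ⊕ {x : V₂ // x ∉ ({a₂, b₂, c₂, d₂} : Finset V₂)})) (v : V₂) :
    v ∈ oneSumY a₁ b₁ a₂ b₂ c₂ d₂ X ↔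
      ((∃ x : {x : V₂ // x ∉ ({a₂, b₂, c₂, d₂} : Finset V₂)}, Sum.inr x ∈ X ∧ ↑x = v) ∨
        (v = a₂ ∧ Sum.inl a₁ ∈ X) ∨ (v = b₂ ∧ Sum.inl b₁ ∈ X)) := by
  simp [oneSumY, or_assoc]

end OneSumAux
section OneSumMaster

variable {V₁ V₂ : Type*} (G₁ : SimpleGraph V₁) (G₂ : SimpleGraph V₂)
  (a₁ b₁ : V₁) (a₂ b₂ c₂ d₂ : V₂) [DecidableEq V₂]
  [Fintype V₁] [Fintype V₂] [DecidableEq V₁]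

set_option maxHeartbeats 1000000 in
lemma oneSum_master (hab₁ : G₁.Adj a₁ b₁) (h12 : a₂ ≠ b₂) (k1 : G₂.Adj a₂ b₂)
    (X : Set (V₁ ⊕ {x : V₂ // x ∉ ({a₂, b₂, c₂, d₂} : Finset V₂)})) :
    indEdges (SimpleGraph.fromEdgeSet (sumES G₁ G₂ a₁ b₁ a₂ b₂ c₂ d₂)) X +
      2 * oneSumEps a₁ b₁ a₂ b₂ c₂ d₂ X =
    indEdges G₁ {v | Sum.inl v ∈ X} +
      indEdges G₂ (oneSumY a₁ b₁ a₂ b₂ c₂ d₂ X) := by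
  classical
  have haK : a₂ ∈ ({a₂, b₂, c₂, d₂} : Finset V₂) := by simp
  have hbK : b₂ ∈ ({a₂, b₂, c₂, d₂} : Finset V₂) := by simp
  set Y : Set V₂ := oneSumY a₁ b₁ a₂ b₂ c₂ d₂ X with hYdef
  have hYmem := oneSumY_mem a₁ b₁ a₂ b₂ c₂ d₂ X
  have hYa : a₂ ∈ Y ↔ Sum.inl a₁ ∈ X := by
    rw [hYdef, hYmem]
    constructor
    · rintro (⟨x, hx, hxe⟩ | ⟨-, h⟩ | ⟨h, -⟩)
      · exact absurd (hxe.symm ▸ haK) x.2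
      · exact h
      · exact absurd h h12
    · intro h; exact Or.inr (Or.inl ⟨rfl, h⟩)
  have hYb : b₂ ∈ Y ↔ Sum.inl b₁ ∈ X := by
    rw [hYdef, hYmem]
    constructor
    · rintro (⟨x, hx, hxe⟩ | ⟨h, -⟩ | ⟨-, h⟩)
      · exact absurd (hxe.symm ▸ hbK) x.2
      · exact absurd h.symm h12
      · exact h
    · intro h; exact Or.inr (Or.inr ⟨rfl, h⟩)
  have hYv : ∀ u : V₂, u ∈ Y → u ≠ a₂ → u ≠ b₂ →
      ∃ x : {x : V₂ // x ∉ ({a₂, b₂, c₂, d₂} : Finset V₂)}, Sum.inr x ∈ X ∧ ↑x = u := by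
    intro u hu hua hub
    rw [hYdef, hYmem] at hu
    rcases hu with h | ⟨h, -⟩ | ⟨h, -⟩
    · exact h
    · exact absurd h hua
    · exact absurd h hub
  have hYx : ∀ x : {x : V₂ // x ∉ ({a₂, b₂, c₂, d₂} : Finset V₂)},
      Sum.inr x ∈ X → ↑x ∈ Y := by
    intro x hx
    rw [hYdef, hYmem]
    exact Or.inl ⟨x, hx, rfl⟩
  -- the four pieces of the edge set of the 1-sum induced by `X`
  have lhs_eq :
      {e ∈ sumES G₁ G₂ a₁ b₁ a₂ b₂ c₂ d₂ | ∀ v ∈ e, v ∈ X} =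
      ({e ∈ {e | ∃ x y : V₁, G₁.Adj x y ∧ s(x, y) ≠ s(a₁, b₁) ∧
          e = s(Sum.inl x, Sum.inl y)} | ∀ v ∈ e, v ∈ X} ∪
       {e ∈ {e | ∃ x y : {x : V₂ // x ∉ ({a₂, b₂, c₂, d₂} : Finset V₂)},
          G₂.Adj ↑x ↑y ∧ e = s(Sum.inr x, Sum.inr y)} | ∀ v ∈ e, v ∈ X} ∪
       {e ∈ {e | ∃ y : {x : V₂ // x ∉ ({a₂, b₂, c₂, d₂} : Finset V₂)},
          G₂.Adj a₂ ↑y ∧ e = s(Sum.inl a₁, Sum.inr y)} | ∀ v ∈ e, v ∈ X} ∪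
       {e ∈ {e | ∃ y : {x : V₂ // x ∉ ({a₂, b₂, c₂, d₂} : Finset V₂)},
          G₂.Adj b₂ ↑y ∧ e = s(Sum.inl b₁, Sum.inr y)} | ∀ v ∈ e, v ∈ X}) := by
    rw [sumES]
    rw [show ∀ A B C D : Set (Sym2 (V₁ ⊕ {x : V₂ // x ∉ ({a₂, b₂, c₂, d₂} : Finset V₂)})),
        A ∪ B ∪ C ∪ D = ((A ∪ B) ∪ C) ∪ D from fun _ _ _ _ => rfl]
    ext e
    simp only [Set.mem_union, Set.mem_sep_iff, Set.mem_setOf_eq]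
    constructor
    · rintro ⟨(((h | h) | h) | h), hX⟩
      · exact Or.inl (Or.inl (Or.inl ⟨h, hX⟩))
      · exact Or.inl (Or.inl (Or.inr ⟨h, hX⟩))
      · exact Or.inl (Or.inr ⟨h, hX⟩)
      · exact Or.inr ⟨h, hX⟩
    · rintro (((⟨h, hX⟩ | ⟨h, hX⟩) | ⟨h, hX⟩) | ⟨h, hX⟩)
      · exact ⟨Or.inl (Or.inl (Or.inl h)), hX⟩
      · exact ⟨Or.inl (Or.inl (Or.inr h)), hX⟩
      · exact ⟨Or.inl (Or.inr h), hX⟩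
      · exact ⟨Or.inr h, hX⟩

  -- name the four pieces
  set D1 := {e ∈ {e | ∃ x y : V₁, G₁.Adj x y ∧ s(x, y) ≠ s(a₁, b₁) ∧
      e = s(Sum.inl x, Sum.inl y)} | ∀ v ∈ e, v ∈ X} with hD1
  set D2 := {e ∈ {e | ∃ x y : {x : V₂ // x ∉ ({a₂, b₂, c₂, d₂} : Finset V₂)},
      G₂.Adj ↑x ↑y ∧ e = s(Sum.inr x, Sum.inr y)} | ∀ v ∈ e, v ∈ X} with hD2
  set D3 := {e ∈ {e | ∃ y : {x : V₂ // x ∉ ({a₂, b₂, c₂, d₂} : Finset V₂)},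
      G₂.Adj a₂ ↑y ∧ e = s(Sum.inl a₁, Sum.inr y)} | ∀ v ∈ e, v ∈ X} with hD3
  set D4 := {e ∈ {e | ∃ y : {x : V₂ // x ∉ ({a₂, b₂, c₂, d₂} : Finset V₂)},
      G₂.Adj b₂ ↑y ∧ e = s(Sum.inl b₁, Sum.inr y)} | ∀ v ∈ e, v ∈ X} with hD4
  -- pairwise disjointness of the pieces
  have dis12 : Disjoint D1 D2 := by
    rw [Set.disjoint_left]
    rintro e ⟨⟨x, y, -, -, rfl⟩, -⟩ ⟨⟨x', y', -, he⟩, -⟩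
    simp [Sym2.eq_iff] at he
  have dis13 : Disjoint D1 D3 := by
    rw [Set.disjoint_left]
    rintro e ⟨⟨x, y, -, -, rfl⟩, -⟩ ⟨⟨y', -, he⟩, -⟩
    simp [Sym2.eq_iff] at he
  have dis14 : Disjoint D1 D4 := by
    rw [Set.disjoint_left]
    rintro e ⟨⟨x, y, -, -, rfl⟩, -⟩ ⟨⟨y', -, he⟩, -⟩
    simp [Sym2.eq_iff] at he
  have dis23 : Disjoint D2 D3 := by
    rw [Set.disjoint_left]
    rintro e ⟨⟨x, y, -, rfl⟩, -⟩ ⟨⟨y', -, he⟩, -⟩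
    simp [Sym2.eq_iff] at he
  have dis24 : Disjoint D2 D4 := by
    rw [Set.disjoint_left]
    rintro e ⟨⟨x, y, -, rfl⟩, -⟩ ⟨⟨y', -, he⟩, -⟩
    simp [Sym2.eq_iff] at he
  have dis34 : Disjoint D3 D4 := by
    rw [Set.disjoint_left]
    rintro e ⟨⟨y, -, rfl⟩, -⟩ ⟨⟨y', -, he⟩, -⟩
    simp only [Sym2.eq_iff] at he
    rcases he with ⟨h, -⟩ | ⟨h, -⟩
    · exact hab₁.ne (Sum.inl_injective h)
    · simp at h
  have hcard_split : {e ∈ sumES G₁ G₂ a₁ b₁ a₂ b₂ c₂ d₂ | ∀ v ∈ e, v ∈ X}.ncard =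
      D1.ncard + D2.ncard + D3.ncard + D4.ncard := by
    rw [lhs_eq, Set.ncard_union_eq ((dis14.union_left dis24).union_left dis34)
        (Set.toFinite _) (Set.toFinite _),
      Set.ncard_union_eq (dis13.union_left dis23) (Set.toFinite _) (Set.toFinite _),
      Set.ncard_union_eq dis12 (Set.toFinite _) (Set.toFinite _)]
  -- pieces of the induced edge sets on the two sides
  set A : Set (Sym2 V₁) := {e ∈ G₁.edgeSet | ∀ v ∈ e, v ∈ {v | Sum.inl v ∈ X}} with hA
  set BY : Set (Sym2 V₂) := {e ∈ G₂.edgeSet | ∀ v ∈ e, v ∈ Y} with hBY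
  set Bin := {e ∈ BY | a₂ ∉ e ∧ b₂ ∉ e} with hBin
  set Ba := {e ∈ BY | a₂ ∈ e ∧ b₂ ∉ e} with hBa
  set Bb := {e ∈ BY | b₂ ∈ e ∧ a₂ ∉ e} with hBb
  set Bab := {e ∈ BY | a₂ ∈ e ∧ b₂ ∈ e} with hBab
  have hBsplit : BY.ncard = Bin.ncard + Ba.ncard + Bb.ncard + Bab.ncard := by
    have hU : BY = ((Bin ∪ Ba) ∪ Bb) ∪ Bab := by
      ext e
      simp only [hBin, hBa, hBb, hBab, Set.mem_union, Set.mem_sep_iff]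
      by_cases ha : a₂ ∈ e <;> by_cases hb : b₂ ∈ e <;> simp [ha, hb]
    have d1 : Disjoint Bin Ba := by
      rw [Set.disjoint_left]; rintro e ⟨-, h, -⟩ ⟨-, h', -⟩; exact h h'
    have d2 : Disjoint (Bin ∪ Ba) Bb := by
      rw [Set.disjoint_left]
      rintro e (⟨-, -, h⟩ | ⟨-, -, h⟩) ⟨-, h', -⟩ <;> exact h h'
    have d3 : Disjoint ((Bin ∪ Ba) ∪ Bb) Bab := by
      rw [Set.disjoint_left]
      rintro e ((⟨-, h, -⟩ | ⟨-, -, h⟩) | ⟨-, -, h⟩) ⟨-, h1, h2⟩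
      · exact h h1
      · exact h h2
      · exact h h1
    rw [hU, Set.ncard_union_eq d3 (Set.toFinite _) (Set.toFinite _),
      Set.ncard_union_eq d2 (Set.toFinite _) (Set.toFinite _),
      Set.ncard_union_eq d1 (Set.toFinite _) (Set.toFinite _)]
  -- counting the pieces
  have cD1 : D1.ncard = (A \ {s(a₁, b₁)}).ncard := by
    refine (bijOn_ncard (f := Sym2.map (Sum.elim id fun _ => a₁)) ?_).symm
    refine ⟨?_, ?_, ?_⟩
    · rintro e ⟨⟨x, y, hxy, hne, rfl⟩, hX⟩
      simp only [Sym2.map_pair_eq, Sum.elim_inl]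
      refine ⟨⟨hxy, ?_⟩, ?_⟩
      · rw [Sym2.ball]
        exact ⟨hX _ (Sym2.mem_mk_left _ _), hX _ (Sym2.mem_mk_right _ _)⟩
      · simpa using hne
    · rintro e ⟨⟨x, y, -, -, rfl⟩, -⟩ e' ⟨⟨x', y', -, -, rfl⟩, -⟩ hee
      simp only [Sym2.map_pair_eq, Sum.elim_inl, Sym2.eq_iff] at hee
      rcases hee with ⟨rfl, rfl⟩ | ⟨rfl, rfl⟩
      · rfl
      · exact Sym2.eq_swap
    · rintro e he
      induction e using Sym2.ind with
      | _ x y =>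
        obtain ⟨⟨hadj, hX₁⟩, hne⟩ := he
        rw [Sym2.ball] at hX₁
        refine ⟨s(Sum.inl x, Sum.inl y), ⟨⟨x, y, hadj, by simpa using hne, rfl⟩, ?_⟩, ?_⟩
        · rw [Sym2.ball]
          exact ⟨hX₁.1, hX₁.2⟩
        · simp [Sym2.map_pair_eq]
  have cD2 : D2.ncard = Bin.ncard := by
    refine (bijOn_ncard (f := Sym2.map (Sum.elim (fun _ => a₂) Subtype.val)) ?_).symm
    refine ⟨?_, ?_, ?_⟩
    · rintro e ⟨⟨x, y, hxy, rfl⟩, hX⟩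
      simp only [Sym2.map_pair_eq, Sum.elim_inr]
      refine ⟨⟨hxy, ?_⟩, ?_, ?_⟩
      · rw [Sym2.ball]
        exact ⟨hYx _ (hX _ (Sym2.mem_mk_left _ _)), hYx _ (hX _ (Sym2.mem_mk_right _ _))⟩
      · rw [Sym2.mem_iff]
        rintro (h | h)
        · exact x.2 (by rw [← h]; exact haK)
        · exact y.2 (by rw [← h]; exact haK)
      · rw [Sym2.mem_iff]
        rintro (h | h)
        · exact x.2 (by rw [← h]; exact hbK)
        · exact y.2 (by rw [← h]; exact hbK)
    · rintro e ⟨⟨x, y, -, rfl⟩, -⟩ e' ⟨⟨x', y', -, rfl⟩, -⟩ hee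
      simp only [Sym2.map_pair_eq, Sum.elim_inr, Sym2.eq_iff] at hee
      rcases hee with ⟨h1, h2⟩ | ⟨h1, h2⟩
      · rw [Subtype.ext h1, Subtype.ext h2]
      · rw [Subtype.ext h1, Subtype.ext h2]
        exact Sym2.eq_swap
    · rintro e he
      induction e using Sym2.ind with
      | _ u v =>
        obtain ⟨⟨hadj, hYe⟩, hae, hbe⟩ := he
        rw [Sym2.ball] at hYe
        rw [Sym2.mem_iff] at hae hbe
        push_neg at hae hbe
        obtain ⟨x, hx, hxu⟩ := hYv u hYe.1 (fun h => hae.1 h.symm) (fun h => hbe.1 h.symm)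
        obtain ⟨y, hy, hyv⟩ := hYv v hYe.2 (fun h => hae.2 h.symm) (fun h => hbe.2 h.symm)
        refine ⟨s(Sum.inr x, Sum.inr y), ⟨⟨x, y, ?_, rfl⟩, ?_⟩, ?_⟩
        · rwa [hxu, hyv]
        · rw [Sym2.ball]
          exact ⟨hx, hy⟩
        · simp [Sym2.map_pair_eq, hxu, hyv]
  have cD3 : D3.ncard = Ba.ncard := by
    refine (bijOn_ncard (f := Sym2.map (Sum.elim (fun _ => a₂) Subtype.val)) ?_).symm
    refine ⟨?_, ?_, ?_⟩
    · rintro e ⟨⟨y, hy, rfl⟩, hX⟩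
      simp only [Sym2.map_pair_eq, Sum.elim_inl, Sum.elim_inr]
      refine ⟨⟨hy, ?_⟩, ?_, ?_⟩
      · rw [Sym2.ball]
        exact ⟨hYa.mpr (hX _ (Sym2.mem_mk_left _ _)), hYx _ (hX _ (Sym2.mem_mk_right _ _))⟩
      · exact Sym2.mem_mk_left _ _
      · rw [Sym2.mem_iff]
        rintro (h | h)
        · exact h12 h.symm
        · exact y.2 (by rw [← h]; exact hbK)
    · rintro e ⟨⟨y, -, rfl⟩, -⟩ e' ⟨⟨y', -, rfl⟩, -⟩ hee
      simp only [Sym2.map_pair_eq, Sum.elim_inl, Sum.elim_inr, Sym2.eq_iff] at hee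
      rcases hee with ⟨-, h2⟩ | ⟨h1, -⟩
      · rw [Subtype.ext h2]
      · exact absurd (y'.2 (by rw [← h1]; exact haK)) not_false
    · rintro e he
      induction e using Sym2.ind with
      | _ u v =>
        obtain ⟨⟨hadj, hYe⟩, hae, hbe⟩ := he
        rw [Sym2.ball] at hYe
        rw [Sym2.mem_iff] at hae hbe
        push_neg at hbe
        -- wlog the first coordinate is a₂
        rcases hae with h | h
        · subst h
          obtain ⟨y, hy, hyv⟩ := hYv v hYe.2 (fun h => (G₂.mem_edgeSet.1 hadj).ne h.symm) (fun h => hbe.2 h.symm)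
          refine ⟨s(Sum.inl a₁, Sum.inr y), ⟨⟨y, ?_, rfl⟩, ?_⟩, ?_⟩
          · rwa [hyv]
          · rw [Sym2.ball]
            exact ⟨hYa.mp hYe.1, hy⟩
          · simp [Sym2.map_pair_eq, hyv]
        · subst h
          obtain ⟨y, hy, hyu⟩ := hYv u hYe.1 (fun h => (G₂.mem_edgeSet.1 hadj).ne h) (fun h => hbe.1 h.symm)
          refine ⟨s(Sum.inl a₁, Sum.inr y), ⟨⟨y, ?_, rfl⟩, ?_⟩, ?_⟩
          · rw [hyu]
            exact (G₂.mem_edgeSet.1 hadj).symm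
          · rw [Sym2.ball]
            exact ⟨hYa.mp hYe.2, hy⟩
          · rw [Sym2.map_pair_eq]
            simp only [Sum.elim_inl, Sum.elim_inr, hyu]
            exact Sym2.eq_swap
  have cD4 : D4.ncard = Bb.ncard := by
    refine (bijOn_ncard (f := Sym2.map (Sum.elim (fun _ => b₂) Subtype.val)) ?_).symm
    refine ⟨?_, ?_, ?_⟩
    · rintro e ⟨⟨y, hy, rfl⟩, hX⟩
      simp only [Sym2.map_pair_eq, Sum.elim_inl, Sum.elim_inr]
      refine ⟨⟨hy, ?_⟩, ?_, ?_⟩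
      · rw [Sym2.ball]
        exact ⟨hYb.mpr (hX _ (Sym2.mem_mk_left _ _)), hYx _ (hX _ (Sym2.mem_mk_right _ _))⟩
      · exact Sym2.mem_mk_left _ _
      · rw [Sym2.mem_iff]
        rintro (h | h)
        · exact h12 h
        · exact y.2 (by rw [← h]; exact haK)
    · rintro e ⟨⟨y, -, rfl⟩, -⟩ e' ⟨⟨y', -, rfl⟩, -⟩ hee
      simp only [Sym2.map_pair_eq, Sum.elim_inl, Sum.elim_inr, Sym2.eq_iff] at hee
      rcases hee with ⟨-, h2⟩ | ⟨h1, -⟩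
      · rw [Subtype.ext h2]
      · exact absurd (y'.2 (by rw [← h1]; exact hbK)) not_false
    · rintro e he
      induction e using Sym2.ind with
      | _ u v =>
        obtain ⟨⟨hadj, hYe⟩, hbe, hae⟩ := he
        rw [Sym2.ball] at hYe
        rw [Sym2.mem_iff] at hae hbe
        push_neg at hae
        rcases hbe with h | h
        · subst h
          obtain ⟨y, hy, hyv⟩ := hYv v hYe.2 (fun h => hae.2 h.symm) (fun h => (G₂.mem_edgeSet.1 hadj).ne h.symm)
          refine ⟨s(Sum.inl b₁, Sum.inr y), ⟨⟨y, ?_, rfl⟩, ?_⟩, ?_⟩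
          · rwa [hyv]
          · rw [Sym2.ball]
            exact ⟨hYb.mp hYe.1, hy⟩
          · simp [Sym2.map_pair_eq, hyv]
        · subst h
          obtain ⟨y, hy, hyu⟩ := hYv u hYe.1 (fun h => hae.1 h.symm) (fun h => (G₂.mem_edgeSet.1 hadj).ne h)
          refine ⟨s(Sum.inl b₁, Sum.inr y), ⟨⟨y, ?_, rfl⟩, ?_⟩, ?_⟩
          · rw [hyu]
            exact (G₂.mem_edgeSet.1 hadj).symm
          · rw [Sym2.ball]
            exact ⟨hYb.mp hYe.2, hy⟩
          · rw [Sym2.map_pair_eq]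
            simp only [Sum.elim_inl, Sum.elim_inr, hyu]
            exact Sym2.eq_swap
  have cBab : Bab.ncard = oneSumEps a₁ b₁ a₂ b₂ c₂ d₂ X := by
    by_cases hε : Sum.inl a₁ ∈ X ∧ Sum.inl b₁ ∈ X
    · rw [oneSumEps_pos a₁ b₁ a₂ b₂ c₂ d₂ hε]
      have hBe : Bab = {s(a₂, b₂)} := by
        refine Set.eq_singleton_iff_unique_mem.mpr ⟨⟨⟨k1, ?_⟩, Sym2.mem_mk_left _ _,
          Sym2.mem_mk_right _ _⟩, ?_⟩
        · rw [Sym2.ball]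
          exact ⟨hYa.mpr hε.1, hYb.mpr hε.2⟩
        · rintro e he
          revert he
          induction e using Sym2.ind with
          | _ u v =>
            rintro ⟨⟨hadj, -⟩, hae, hbe⟩
            rw [Sym2.mem_iff] at hae hbe
            rw [Sym2.eq_iff]
            rcases hae with h1 | h1 <;> rcases hbe with h2 | h2
            · exact absurd (h1.trans h2.symm) h12
            · exact Or.inl ⟨h1.symm, h2.symm⟩
            · exact Or.inr ⟨h2.symm, h1.symm⟩
            · exact absurd (h1.trans h2.symm) h12
      rw [hBe, Set.ncard_singleton]
    · rw [oneSumEps_neg a₁ b₁ a₂ b₂ c₂ d₂ hε]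
      have hBe : Bab = ∅ := by
        refine Set.eq_empty_iff_forall_notMem.mpr ?_
        rintro e ⟨⟨-, hY'⟩, hae, hbe⟩
        exact hε ⟨hYa.mp (hY' _ hae), hYb.mp (hY' _ hbe)⟩
      rw [hBe, Set.ncard_empty]
  have cA : A.ncard = (A \ {s(a₁, b₁)}).ncard + oneSumEps a₁ b₁ a₂ b₂ c₂ d₂ X := by
    by_cases hε : Sum.inl a₁ ∈ X ∧ Sum.inl b₁ ∈ X
    · rw [oneSumEps_pos a₁ b₁ a₂ b₂ c₂ d₂ hε]
      refine (Set.ncard_diff_singleton_add_one ?_ (Set.toFinite _)).symm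
      refine ⟨hab₁, ?_⟩
      rw [Sym2.ball]
      exact ⟨hε.1, hε.2⟩
    · rw [oneSumEps_neg a₁ b₁ a₂ b₂ c₂ d₂ hε, add_zero, Set.diff_singleton_eq_self]
      rintro ⟨-, hY'⟩
      rw [Sym2.ball] at hY'
      exact hε hY'
  -- putting it all together
  unfold indEdges
  rw [sumES_edgeSet, ← hA, ← hBY, hcard_split, cD1, cD2, cD3, cD4, hBsplit,
    cBab, cA]
  omega

end OneSumMaster
section OneSumFive

variable {V₁ V₂ : Type*} [DecidableEq V₂] [Fintype V₂] (G₂ : SimpleGraph V₂) (a₂ b₂ c₂ d₂ : V₂)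

set_option maxHeartbeats 1000000 in
lemma five_edges
    (h12 : a₂ ≠ b₂) (h13 : a₂ ≠ c₂) (h14 : a₂ ≠ d₂)
    (h23 : b₂ ≠ c₂) (h24 : b₂ ≠ d₂) (h34 : c₂ ≠ d₂)
    (k2 : G₂.Adj a₂ c₂) (k3 : G₂.Adj a₂ d₂)
    (k4 : G₂.Adj b₂ c₂) (k5 : G₂.Adj b₂ d₂) (k6 : G₂.Adj c₂ d₂)
    (hc : ∀ x : V₂, G₂.Adj c₂ x → x ∈ ({a₂, b₂, d₂} : Finset V₂))
    (hd : ∀ x : V₂, G₂.Adj d₂ x → x ∈ ({a₂, b₂, c₂} : Finset V₂))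
    (Y : Set V₂) (ha : a₂ ∈ Y) (hb : b₂ ∈ Y) (hcY : c₂ ∉ Y) (hdY : d₂ ∉ Y) :
    indEdges G₂ (Y ∪ {c₂, d₂}) = indEdges G₂ Y + 5 := by
  classical
  have key : {e ∈ G₂.edgeSet | ∀ v ∈ e, v ∈ Y ∪ {c₂, d₂}} =
      {e ∈ G₂.edgeSet | ∀ v ∈ e, v ∈ Y} ∪
        ({s(a₂, c₂), s(b₂, c₂), s(c₂, d₂), s(a₂, d₂), s(b₂, d₂)} : Set (Sym2 V₂)) := by
    ext e
    induction e using Sym2.ind with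
    | _ u v =>
      simp only [Set.mem_sep_iff, Set.mem_union, Set.mem_insert_iff,
        Set.mem_singleton_iff, Sym2.ball]
      constructor
      · rintro ⟨hadj, hu, hv⟩
        have hadj' := G₂.mem_edgeSet.1 hadj
        rcases hu with hu | hu | hu <;> rcases hv with hv | hv | hv
        · exact Or.inl ⟨hadj, hu, hv⟩
        · have := hc u (by rw [hv] at hadj'; exact hadj'.symm)
          simp only [Finset.mem_insert, Finset.mem_singleton] at this
          rcases this with h | h | h <;> rw [h, hv] <;> simp [Sym2.eq_iff]
        · have := hd u (by rw [hv] at hadj'; exact hadj'.symm)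
          simp only [Finset.mem_insert, Finset.mem_singleton] at this
          rcases this with h | h | h <;> rw [h, hv] <;> simp [Sym2.eq_iff]
        · have := hc v (by rw [hu] at hadj'; exact hadj')
          simp only [Finset.mem_insert, Finset.mem_singleton] at this
          rcases this with h | h | h <;> rw [h, hu] <;> simp [Sym2.eq_iff]
        · exfalso; rw [hu, hv] at hadj'; exact G₂.irrefl hadj'
        · rw [hu, hv]; simp [Sym2.eq_iff]
        · have := hd v (by rw [hu] at hadj'; exact hadj')
          simp only [Finset.mem_insert, Finset.mem_singleton] at this
          rcases this with h | h | h <;> rw [h, hu] <;> simp [Sym2.eq_iff]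
        · rw [hu, hv]; simp [Sym2.eq_iff]
        · exfalso; rw [hu, hv] at hadj'; exact G₂.irrefl hadj'
      · rintro (⟨hadj, hu, hv⟩ | h | h | h | h | h)
        · exact ⟨hadj, Or.inl hu, Or.inl hv⟩
        all_goals rw [Sym2.eq_iff] at h
        all_goals rcases h with ⟨rfl, rfl⟩ | ⟨rfl, rfl⟩
        · exact ⟨k2, Or.inl ha, Or.inr (Or.inl rfl)⟩
        · exact ⟨k2.symm, Or.inr (Or.inl rfl), Or.inl ha⟩
        · exact ⟨k4, Or.inl hb, Or.inr (Or.inl rfl)⟩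
        · exact ⟨k4.symm, Or.inr (Or.inl rfl), Or.inl hb⟩
        · exact ⟨k6, Or.inr (Or.inl rfl), Or.inr (Or.inr rfl)⟩
        · exact ⟨k6.symm, Or.inr (Or.inr rfl), Or.inr (Or.inl rfl)⟩
        · exact ⟨k3, Or.inl ha, Or.inr (Or.inr rfl)⟩
        · exact ⟨k3.symm, Or.inr (Or.inr rfl), Or.inl ha⟩
        · exact ⟨k5, Or.inl hb, Or.inr (Or.inr rfl)⟩
        · exact ⟨k5.symm, Or.inr (Or.inr rfl), Or.inl hb⟩
  have hdisj : Disjoint {e ∈ G₂.edgeSet | ∀ v ∈ e, v ∈ Y}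
      ({s(a₂, c₂), s(b₂, c₂), s(c₂, d₂), s(a₂, d₂), s(b₂, d₂)} : Set (Sym2 V₂)) := by
    rw [Set.disjoint_left]
    rintro e ⟨-, hY⟩ (rfl | rfl | rfl | rfl | rfl)
    · exact hcY (hY _ (Sym2.mem_mk_right _ _))
    · exact hcY (hY _ (Sym2.mem_mk_right _ _))
    · exact hcY (hY _ (Sym2.mem_mk_left _ _))
    · exact hdY (hY _ (Sym2.mem_mk_right _ _))
    · exact hdY (hY _ (Sym2.mem_mk_right _ _))
  have hfive : ({s(a₂, c₂), s(b₂, c₂), s(c₂, d₂), s(a₂, d₂), s(b₂, d₂)} :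
      Set (Sym2 V₂)).ncard = 5 := by
    have h1 : s(a₂, c₂) ∉ ({s(b₂, c₂), s(c₂, d₂), s(a₂, d₂), s(b₂, d₂)} : Set (Sym2 V₂)) := by
      simp [Sym2.eq_iff, h12, h13, h14, h23, h24, h34, h12.symm, h13.symm, h14.symm,
        h23.symm, h24.symm, h34.symm]
    have h2 : s(b₂, c₂) ∉ ({s(c₂, d₂), s(a₂, d₂), s(b₂, d₂)} : Set (Sym2 V₂)) := by
      simp [Sym2.eq_iff, h12, h13, h14, h23, h24, h34, h12.symm, h13.symm, h14.symm,
        h23.symm, h24.symm, h34.symm]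
    have h3 : s(c₂, d₂) ∉ ({s(a₂, d₂), s(b₂, d₂)} : Set (Sym2 V₂)) := by
      simp [Sym2.eq_iff, h12, h13, h14, h23, h24, h34, h12.symm, h13.symm, h14.symm,
        h23.symm, h24.symm, h34.symm]
    have h4 : s(a₂, d₂) ∉ ({s(b₂, d₂)} : Set (Sym2 V₂)) := by
      simp [Sym2.eq_iff, h12, h13, h14, h23, h24, h34, h12.symm, h13.symm, h14.symm,
        h23.symm, h24.symm, h34.symm]
    rw [Set.ncard_insert_of_notMem h1 (Set.toFinite _),
      Set.ncard_insert_of_notMem h2 (Set.toFinite _),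
      Set.ncard_insert_of_notMem h3 (Set.toFinite _),
      Set.ncard_insert_of_notMem h4 (Set.toFinite _), Set.ncard_singleton]
  unfold indEdges
  rw [key, Set.ncard_union_eq hdisj (Set.toFinite _) (Set.toFinite _), hfive]

end OneSumFive
section OneSumCards

variable {V₁ V₂ : Type*} (G₁ : SimpleGraph V₁) (G₂ : SimpleGraph V₂)
  (a₁ b₁ : V₁) (a₂ b₂ c₂ d₂ : V₂) [DecidableEq V₂] [Fintype V₂]

open Classical in
noncomputable def epsA (X : Set (V₁ ⊕ {x : V₂ // x ∉ ({a₂, b₂, c₂, d₂} : Finset V₂)})) : ℕ :=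
  if Sum.inl a₁ ∈ X then 1 else 0

open Classical in
noncomputable def epsB (X : Set (V₁ ⊕ {x : V₂ // x ∉ ({a₂, b₂, c₂, d₂} : Finset V₂)})) : ℕ :=
  if Sum.inl b₁ ∈ X then 1 else 0

lemma epsA_pos {X : Set (V₁ ⊕ {x : V₂ // x ∉ ({a₂, b₂, c₂, d₂} : Finset V₂)})}
    (h : Sum.inl a₁ ∈ X) : epsA a₁ a₂ b₂ c₂ d₂ X = 1 := by rw [epsA, if_pos h]

lemma epsA_neg {X : Set (V₁ ⊕ {x : V₂ // x ∉ ({a₂, b₂, c₂, d₂} : Finset V₂)})}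
    (h : Sum.inl a₁ ∉ X) : epsA a₁ a₂ b₂ c₂ d₂ X = 0 := by rw [epsA, if_neg h]

lemma epsB_pos {X : Set (V₁ ⊕ {x : V₂ // x ∉ ({a₂, b₂, c₂, d₂} : Finset V₂)})}
    (h : Sum.inl b₁ ∈ X) : epsB b₁ a₂ b₂ c₂ d₂ X = 1 := by rw [epsB, if_pos h]

lemma epsB_neg {X : Set (V₁ ⊕ {x : V₂ // x ∉ ({a₂, b₂, c₂, d₂} : Finset V₂)})}
    (h : Sum.inl b₁ ∉ X) : epsB b₁ a₂ b₂ c₂ d₂ X = 0 := by rw [epsB, if_neg h]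

lemma oneSumY_ncard (h12 : a₂ ≠ b₂)
    (X : Set (V₁ ⊕ {x : V₂ // x ∉ ({a₂, b₂, c₂, d₂} : Finset V₂)})) :
    (oneSumY a₁ b₁ a₂ b₂ c₂ d₂ X).ncard =
      {x : {x : V₂ // x ∉ ({a₂, b₂, c₂, d₂} : Finset V₂)} | Sum.inr x ∈ X}.ncard +
        epsA a₁ a₂ b₂ c₂ d₂ X + epsB b₁ a₂ b₂ c₂ d₂ X := by
  classical
  have himg : (Subtype.val '' {x : {x : V₂ // x ∉ ({a₂, b₂, c₂, d₂} : Finset V₂)} |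
      Sum.inr x ∈ X}).ncard = {x : {x : V₂ // x ∉ ({a₂, b₂, c₂, d₂} : Finset V₂)} |
      Sum.inr x ∈ X}.ncard :=
    Set.ncard_image_of_injective _ Subtype.val_injective
  have hana : a₂ ∉ Subtype.val '' {x : {x : V₂ // x ∉ ({a₂, b₂, c₂, d₂} : Finset V₂)} |
      Sum.inr x ∈ X} := by
    rintro ⟨x, -, hx⟩
    exact x.2 (by rw [hx]; simp)
  have hbnb : b₂ ∉ Subtype.val '' {x : {x : V₂ // x ∉ ({a₂, b₂, c₂, d₂} : Finset V₂)} |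
      Sum.inr x ∈ X} := by
    rintro ⟨x, -, hx⟩
    exact x.2 (by rw [hx]; simp)
  rw [oneSumY]
  by_cases ha : Sum.inl a₁ ∈ X <;> by_cases hb : Sum.inl b₁ ∈ X
  · rw [epsA_pos a₁ a₂ b₂ c₂ d₂ ha, epsB_pos b₁ a₂ b₂ c₂ d₂ hb]
    have e1 : {v : V₂ | v = a₂ ∧ Sum.inl a₁ ∈ X} = {a₂} := by ext v; simp [ha]
    have e2 : {v : V₂ | v = b₂ ∧ Sum.inl b₁ ∈ X} = {b₂} := by ext v; simp [hb]
    rw [e1, e2, Set.ncard_union_eq (by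
        rw [Set.disjoint_singleton_right]
        rintro (h | h)
        · exact hbnb h
        · exact h12 (Set.mem_singleton_iff.1 h).symm) (Set.toFinite _) (Set.toFinite _),
      Set.ncard_union_eq (by rw [Set.disjoint_singleton_right]; exact hana)
        (Set.toFinite _) (Set.toFinite _), himg, Set.ncard_singleton,
      Set.ncard_singleton]
  · rw [epsA_pos a₁ a₂ b₂ c₂ d₂ ha, epsB_neg b₁ a₂ b₂ c₂ d₂ hb]
    have e1 : {v : V₂ | v = a₂ ∧ Sum.inl a₁ ∈ X} = {a₂} := by ext v; simp [ha]
    have e2 : {v : V₂ | v = b₂ ∧ Sum.inl b₁ ∈ X} = ∅ := by ext v; simp [hb]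
    rw [e1, e2, Set.union_empty,
      Set.ncard_union_eq (by rw [Set.disjoint_singleton_right]; exact hana)
        (Set.toFinite _) (Set.toFinite _), himg, Set.ncard_singleton]
  · rw [epsA_neg a₁ a₂ b₂ c₂ d₂ ha, epsB_pos b₁ a₂ b₂ c₂ d₂ hb]
    have e1 : {v : V₂ | v = a₂ ∧ Sum.inl a₁ ∈ X} = ∅ := by ext v; simp [ha]
    have e2 : {v : V₂ | v = b₂ ∧ Sum.inl b₁ ∈ X} = {b₂} := by ext v; simp [hb]
    rw [e1, e2, Set.union_empty,
      Set.ncard_union_eq (by rw [Set.disjoint_singleton_right]; exact hbnb)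
        (Set.toFinite _) (Set.toFinite _), himg, Set.ncard_singleton, add_zero]
  · rw [epsA_neg a₁ a₂ b₂ c₂ d₂ ha, epsB_neg b₁ a₂ b₂ c₂ d₂ hb]
    have e1 : {v : V₂ | v = a₂ ∧ Sum.inl a₁ ∈ X} = ∅ := by ext v; simp [ha]
    have e2 : {v : V₂ | v = b₂ ∧ Sum.inl b₁ ∈ X} = ∅ := by ext v; simp [hb]
    rw [e1, e2, Set.union_empty, Set.union_empty, himg, add_zero, add_zero]

end OneSumCards

set_option maxHeartbeats 1000000 in
/-- The 1-sum: delete the edge `a₁b₁` of `G₁`; delete `c₂, d₂` and the edge `a₂b₂`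
from `G₂`; identify `a₁` with `a₂` and `b₁` with `b₂`. -/
theorem one_sum_circuit {V₁ V₂ : Type*} [Fintype V₁] [Fintype V₂]
    [DecidableEq V₁] [DecidableEq V₂]
    (G₁ : SimpleGraph V₁) (G₂ : SimpleGraph V₂)
    (h₁ : IsCircuit G₁) (h₂ : IsCircuit G₂)
    (a₁ b₁ : V₁) (a₂ b₂ c₂ d₂ : V₂)
    (hab₁ : G₁.Adj a₁ b₁)
    -- `a₂, b₂, c₂, d₂` are distinct and induce a copy of `K₄` in `G₂`
    (h12 : a₂ ≠ b₂) (h13 : a₂ ≠ c₂) (h14 : a₂ ≠ d₂)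
    (h23 : b₂ ≠ c₂) (h24 : b₂ ≠ d₂) (h34 : c₂ ≠ d₂)
    (k1 : G₂.Adj a₂ b₂) (k2 : G₂.Adj a₂ c₂) (k3 : G₂.Adj a₂ d₂)
    (k4 : G₂.Adj b₂ c₂) (k5 : G₂.Adj b₂ d₂) (k6 : G₂.Adj c₂ d₂)
    -- `{a₂, b₂}` is a 2-vertex cut separating `{c₂, d₂}` from the rest
    (hc : ∀ x : V₂, G₂.Adj c₂ x → x ∈ ({a₂, b₂, d₂} : Finset V₂))
    (hd : ∀ x : V₂, G₂.Adj d₂ x → x ∈ ({a₂, b₂, c₂} : Finset V₂))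
    (hrest : ∃ x : V₂, x ∉ ({a₂, b₂, c₂, d₂} : Finset V₂)) :
    IsCircuit (SimpleGraph.fromEdgeSet
      (({e | ∃ x y : V₁, G₁.Adj x y ∧ s(x, y) ≠ s(a₁, b₁) ∧ e = s(Sum.inl x, Sum.inl y)} :
          Set (Sym2 (V₁ ⊕ {x : V₂ // x ∉ ({a₂, b₂, c₂, d₂} : Finset V₂)}))) ∪
       {e | ∃ x y : {x : V₂ // x ∉ ({a₂, b₂, c₂, d₂} : Finset V₂)},
          G₂.Adj ↑x ↑y ∧ e = s(Sum.inr x, Sum.inr y)} ∪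
       {e | ∃ y : {x : V₂ // x ∉ ({a₂, b₂, c₂, d₂} : Finset V₂)},
          G₂.Adj a₂ ↑y ∧ e = s(Sum.inl a₁, Sum.inr y)} ∪
       {e | ∃ y : {x : V₂ // x ∉ ({a₂, b₂, c₂, d₂} : Finset V₂)},
          G₂.Adj b₂ ↑y ∧ e = s(Sum.inl b₁, Sum.inr y)})) := by
  classical
  show IsCircuit (SimpleGraph.fromEdgeSet (sumES G₁ G₂ a₁ b₁ a₂ b₂ c₂ d₂))
  -- cardinality of the vertex set
  have hcV' : Fintype.card {x : V₂ // x ∉ ({a₂, b₂, c₂, d₂} : Finset V₂)} + 4 =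
      Fintype.card V₂ := by
    have h4 : ({a₂, b₂, c₂, d₂} : Finset V₂).card = 4 := by
      rw [show ({a₂, b₂, c₂, d₂} : Finset V₂) = insert a₂ (insert b₂ (insert c₂ {d₂})) from
        rfl, Finset.card_insert_of_notMem (by simp [h12, h13, h14]),
        Finset.card_insert_of_notMem (by simp [h23, h24]),
        Finset.card_insert_of_notMem (by simp [h34]), Finset.card_singleton]
    have h5 : Fintype.card {x : V₂ // x ∉ ({a₂, b₂, c₂, d₂} : Finset V₂)} =
        Fintype.card V₂ - Fintype.card {x : V₂ // x ∈ ({a₂, b₂, c₂, d₂} : Finset V₂)} :=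
      Fintype.card_subtype_compl _
    have h6 : Fintype.card {x : V₂ // x ∈ ({a₂, b₂, c₂, d₂} : Finset V₂)} = 4 := by
      rw [Fintype.card_coe, h4]
    have h7 : Fintype.card {x : V₂ // x ∈ ({a₂, b₂, c₂, d₂} : Finset V₂)} ≤
        Fintype.card V₂ := Fintype.card_le_of_injective Subtype.val Subtype.val_injective
    omega
  have hcW : Fintype.card (V₁ ⊕ {x : V₂ // x ∉ ({a₂, b₂, c₂, d₂} : Finset V₂)}) =
      Fintype.card V₁ + Fintype.card {x : V₂ // x ∉ ({a₂, b₂, c₂, d₂} : Finset V₂)} :=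
    Fintype.card_sum
  constructor
  · -- |E| = 2|V| - 1
    have hmas := oneSum_master G₁ G₂ a₁ b₁ a₂ b₂ c₂ d₂ hab₁ h12 k1 Set.univ
    rw [oneSumEps_pos a₁ b₁ a₂ b₂ c₂ d₂ ⟨Set.mem_univ _, Set.mem_univ _⟩] at hmas
    have hX1 : {v : V₁ | Sum.inl v ∈ (Set.univ :
        Set (V₁ ⊕ {x : V₂ // x ∉ ({a₂, b₂, c₂, d₂} : Finset V₂)}))} = Set.univ := by
      ext v; simp
    rw [hX1] at hmas
    set Y := oneSumY a₁ b₁ a₂ b₂ c₂ d₂ (Set.univ :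
      Set (V₁ ⊕ {x : V₂ // x ∉ ({a₂, b₂, c₂, d₂} : Finset V₂)})) with hY
    have hca : a₂ ∈ Y := by
      rw [hY, oneSumY_mem]; exact Or.inr (Or.inl ⟨rfl, Set.mem_univ _⟩)
    have hcb : b₂ ∈ Y := by
      rw [hY, oneSumY_mem]; exact Or.inr (Or.inr ⟨rfl, Set.mem_univ _⟩)
    have hcc : c₂ ∉ Y := by
      rw [hY, oneSumY_mem]
      rintro (⟨x, -, hx⟩ | ⟨h, -⟩ | ⟨h, -⟩)
      · exact x.2 (by rw [hx]; simp)
      · exact h13 h.symm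
      · exact h23 h.symm
    have hcd : d₂ ∉ Y := by
      rw [hY, oneSumY_mem]
      rintro (⟨x, -, hx⟩ | ⟨h, -⟩ | ⟨h, -⟩)
      · exact x.2 (by rw [hx]; simp)
      · exact h14 h.symm
      · exact h24 h.symm
    have hYun : Y ∪ {c₂, d₂} = Set.univ := by
      ext v
      simp only [Set.mem_union, Set.mem_insert_iff, Set.mem_singleton_iff, Set.mem_univ,
        iff_true]
      by_cases hv : v ∈ ({a₂, b₂, c₂, d₂} : Finset V₂)
      · simp only [Finset.mem_insert, Finset.mem_singleton] at hv
        rcases hv with rfl | rfl | rfl | rfl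
        · exact Or.inl hca
        · exact Or.inl hcb
        · exact Or.inr (Or.inl rfl)
        · exact Or.inr (Or.inr rfl)
      · refine Or.inl ?_
        rw [hY, oneSumY_mem]
        exact Or.inl ⟨⟨v, hv⟩, Set.mem_univ _, rfl⟩
    have h5 := five_edges G₂ a₂ b₂ c₂ d₂ h12 h13 h14 h23 h24 h34 k2 k3 k4 k5 k6 hc hd Y
      hca hcb hcc hcd
    rw [hYun, indEdges_univ] at h5
    rw [indEdges_univ, indEdges_univ] at hmas
    have e1 := h₁.1
    have e2 := h₂.1
    rw [hcW]
    omega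
  · -- sparsity
    intro Xf hXf
    set X : Set (V₁ ⊕ {x : V₂ // x ∉ ({a₂, b₂, c₂, d₂} : Finset V₂)}) := ↑Xf with hX
    by_cases hXe : Xf = ∅
    · rw [hX, hXe, Finset.coe_empty, indEdges_empty]
      exact Nat.zero_le _
    have hXne : Xf.Nonempty := Finset.nonempty_iff_ne_empty.2 hXe
    have hmas := oneSum_master G₁ G₂ a₁ b₁ a₂ b₂ c₂ d₂ hab₁ h12 k1 X
    set X₁ : Set V₁ := {v | Sum.inl v ∈ X} with hX₁
    set X₂ : Set {x : V₂ // x ∉ ({a₂, b₂, c₂, d₂} : Finset V₂)} := {x | Sum.inr x ∈ X}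
      with hX₂
    set Y := oneSumY a₁ b₁ a₂ b₂ c₂ d₂ X with hY
    have hYn := oneSumY_ncard a₁ b₁ a₂ b₂ c₂ d₂ h12 X
    rw [← hY, ← hX₂] at hYn
    have hsplit : Xf.card = X₁.ncard + X₂.ncard := by
      have himg : X = Sum.inl '' X₁ ∪ Sum.inr '' X₂ := by
        ext w
        cases w with
        | inl v => simp [hX₁]
        | inr x => simp [hX₂]
      have hdisj : Disjoint (Sum.inl '' X₁)
          (Sum.inr '' X₂ : Set (V₁ ⊕ {x : V₂ // x ∉ ({a₂, b₂, c₂, d₂} : Finset V₂)})) := by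
        rw [Set.disjoint_left]
        rintro w ⟨v, -, rfl⟩ ⟨x, -, h⟩
        exact Sum.inl_ne_inr h.symm
      rw [← Set.ncard_coe_finset Xf, ← hX, himg,
        Set.ncard_union_eq hdisj (Set.toFinite _) (Set.toFinite _),
        Set.ncard_image_of_injective _ Sum.inl_injective,
        Set.ncard_image_of_injective _ Sum.inr_injective]
    have hcc : c₂ ∉ Y := by
      rw [hY, oneSumY_mem]
      rintro (⟨x, -, hx⟩ | ⟨h, -⟩ | ⟨h, -⟩)
      · exact x.2 (by rw [hx]; simp)
      · exact h13 h.symm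
      · exact h23 h.symm
    have hcd : d₂ ∉ Y := by
      rw [hY, oneSumY_mem]
      rintro (⟨x, -, hx⟩ | ⟨h, -⟩ | ⟨h, -⟩)
      · exact x.2 (by rw [hx]; simp)
      · exact h14 h.symm
      · exact h24 h.symm
    have hYprop : Y ≠ Set.univ := by
      intro h
      rw [h] at hcc
      exact hcc (Set.mem_univ _)
    suffices hgoal : indEdges (SimpleGraph.fromEdgeSet (sumES G₁ G₂ a₁ b₁ a₂ b₂ c₂ d₂)) X +
        2 ≤ 2 * Xf.card by omega
    by_cases hX1u : X₁ = Set.univ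
    · -- all of V₁ is in X
      have ha : Sum.inl a₁ ∈ X := by
        have : a₁ ∈ X₁ := by rw [hX1u]; trivial
        exact this
      have hb : Sum.inl b₁ ∈ X := by
        have : b₁ ∈ X₁ := by rw [hX1u]; trivial
        exact this
      rw [oneSumEps_pos a₁ b₁ a₂ b₂ c₂ d₂ ⟨ha, hb⟩] at hmas
      have hX2u : X₂ ≠ Set.univ := by
        intro h
        refine hXf.ne (Finset.eq_univ_iff_forall.mpr ?_)
        intro w
        cases w with
        | inl v =>
          have : v ∈ X₁ := by rw [hX1u]; trivial
          exact this
        | inr x =>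
          have : x ∈ X₂ := by rw [h]; trivial
          exact this
      obtain ⟨x₀, hx₀⟩ : ∃ x, x ∉ X₂ := by
        by_contra h
        push_neg at h
        exact hX2u (Set.eq_univ_of_forall h)
      have hca : a₂ ∈ Y := by rw [hY, oneSumY_mem]; exact Or.inr (Or.inl ⟨rfl, ha⟩)
      have hcb : b₂ ∈ Y := by rw [hY, oneSumY_mem]; exact Or.inr (Or.inr ⟨rfl, hb⟩)
      have h5 := five_edges G₂ a₂ b₂ c₂ d₂ h12 h13 h14 h23 h24 h34 k2 k3 k4 k5 k6 hc hd Y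
        hca hcb hcc hcd
      have hZu : Y ∪ {c₂, d₂} ≠ Set.univ := by
        intro h
        have hx : (↑x₀ : V₂) ∈ Y ∪ {c₂, d₂} := by rw [h]; trivial
        rcases hx with hmem | hmem
        · rw [hY, oneSumY_mem] at hmem
          rcases hmem with ⟨x, hxX, hxe⟩ | ⟨h', -⟩ | ⟨h', -⟩
          · exact hx₀ (by rw [hX₂]; exact (Subtype.ext hxe : x = x₀) ▸ hxX)
          · exact x₀.2 (by rw [h']; simp)
          · exact x₀.2 (by rw [h']; simp)
        · rcases hmem with h' | h'
          · exact x₀.2 (by rw [h']; simp)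
          · exact x₀.2 (by rw [h']; simp)
      have hZne : (Y ∪ {c₂, d₂}).Nonempty := ⟨a₂, Or.inl hca⟩
      have hb2 := circuit_bound h₂ _ hZu hZne
      rw [h5] at hb2
      have hZcard : (Y ∪ ({c₂, d₂} : Set V₂)).ncard = Y.ncard + 2 := by
        have : Y ∪ ({c₂, d₂} : Set V₂) = insert c₂ (insert d₂ Y) := by
          ext v
          simp only [Set.mem_union, Set.mem_insert_iff, Set.mem_singleton_iff]
          tauto
        rw [this, Set.ncard_insert_of_notMem (by
            simp only [Set.mem_insert_iff]
            rintro (h | h)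
            · exact h34 h
            · exact hcc h) (Set.toFinite _),
          Set.ncard_insert_of_notMem hcd (Set.toFinite _)]
      rw [hZcard] at hb2
      rw [hX1u, indEdges_univ] at hmas
      have hXcard1 : X₁.ncard = Fintype.card V₁ := by
        rw [hX1u, Set.ncard_univ, Nat.card_eq_fintype_card]
      rw [epsA_pos a₁ a₂ b₂ c₂ d₂ ha, epsB_pos b₁ a₂ b₂ c₂ d₂ hb] at hYn
      have e1 := h₁.1
      omega
    · by_cases hX1e : X₁ = ∅
      · -- nothing of V₁ is in X
        have ha : Sum.inl a₁ ∉ X := by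
          intro h
          have : a₁ ∈ X₁ := h
          rw [hX1e] at this
          exact this
        have hb : Sum.inl b₁ ∉ X := by
          intro h
          have : b₁ ∈ X₁ := h
          rw [hX1e] at this
          exact this
        rw [oneSumEps_neg a₁ b₁ a₂ b₂ c₂ d₂ (fun h => ha h.1)] at hmas
        rw [epsA_neg a₁ a₂ b₂ c₂ d₂ ha, epsB_neg b₁ a₂ b₂ c₂ d₂ hb] at hYn
        have hA0 : indEdges G₁ X₁ = 0 := by rw [hX1e, indEdges_empty]
        have hX2ne : X₂.Nonempty := by
          obtain ⟨w, hw⟩ := hXne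
          cases w with
          | inl v =>
            exfalso
            have : v ∈ X₁ := by rw [hX₁]; exact Finset.mem_coe.2 hw
            rw [hX1e] at this
            exact this
          | inr x => exact ⟨x, by rw [hX₂]; exact Finset.mem_coe.2 hw⟩
        have hYne : Y.Nonempty := by
          obtain ⟨x, hx⟩ := hX2ne
          exact ⟨↑x, by rw [hY, oneSumY_mem]; exact Or.inl ⟨x, hx, rfl⟩⟩
        have hb2 := circuit_bound h₂ Y hYprop hYne
        have hX1c : X₁.ncard = 0 := by rw [hX1e, Set.ncard_empty]
        omega
      · -- a proper nonempty part of V₁ is in X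
        have hX1ne : X₁.Nonempty := Set.nonempty_iff_ne_empty.2 hX1e
        have hb1 := circuit_bound h₁ X₁ hX1u hX1ne
        by_cases hYe : Y = ∅
        · have ha : Sum.inl a₁ ∉ X := by
            intro h
            have : a₂ ∈ Y := by rw [hY, oneSumY_mem]; exact Or.inr (Or.inl ⟨rfl, h⟩)
            rw [hYe] at this
            exact this
          have hb : Sum.inl b₁ ∉ X := by
            intro h
            have : b₂ ∈ Y := by rw [hY, oneSumY_mem]; exact Or.inr (Or.inr ⟨rfl, h⟩)
            rw [hYe] at this
            exact this
          have hX2e : X₂ = ∅ := by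
            ext x
            simp only [Set.mem_empty_iff_false, iff_false]
            intro hx
            have : ↑x ∈ Y := by rw [hY, oneSumY_mem]; exact Or.inl ⟨x, hx, rfl⟩
            rw [hYe] at this
            exact this
          rw [oneSumEps_neg a₁ b₁ a₂ b₂ c₂ d₂ (fun h => ha h.1)] at hmas
          have hB0 : indEdges G₂ Y = 0 := by rw [hYe, indEdges_empty]
          have hX2c : X₂.ncard = 0 := by rw [hX2e, Set.ncard_empty]
          omega
        · have hYne : Y.Nonempty := Set.nonempty_iff_ne_empty.2 hYe
          have hb2 := circuit_bound h₂ Y hYprop hYne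
          have heps : epsA a₁ a₂ b₂ c₂ d₂ X + epsB b₁ a₂ b₂ c₂ d₂ X ≤
              oneSumEps a₁ b₁ a₂ b₂ c₂ d₂ X + 1 := by
            by_cases ha : Sum.inl a₁ ∈ X <;> by_cases hb : Sum.inl b₁ ∈ X
            · rw [epsA_pos a₁ a₂ b₂ c₂ d₂ ha, epsB_pos b₁ a₂ b₂ c₂ d₂ hb,
                oneSumEps_pos a₁ b₁ a₂ b₂ c₂ d₂ ⟨ha, hb⟩]
            · rw [epsA_pos a₁ a₂ b₂ c₂ d₂ ha, epsB_neg b₁ a₂ b₂ c₂ d₂ hb]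
              omega
            · rw [epsA_neg a₁ a₂ b₂ c₂ d₂ ha, epsB_pos b₁ a₂ b₂ c₂ d₂ hb]
              omega
            · rw [epsA_neg a₁ a₂ b₂ c₂ d₂ ha, epsB_neg b₁ a₂ b₂ c₂ d₂ hb]
              omega
          omega
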